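/- If a fibration ξ = (E, p, B) with simply connected fiber F and simply connected base B has trivial rationalization ξ_ℚ = (E_ℚ, p_ℚ, B_ℚ) (i.e. E_ℚ ≃ B_ℚ × F_ℚ over B_ℚ), then its fiberwise rationalization ξ_(ℚ) = (E_(ℚ), p_(ℚ), B) is a trivial fibration over B, i.e. E_(ℚ) ≃ B × F_ℚ over B. -/

import Mathlib

open scoped Topology unitInterval Manifold ContinuousMap
open Function

noncomputable section



namespace SimplexCategory

open scoped NNReal in
/-- The topological simplex associated to `x : SimplexCategory`
(as in the older Mathlib). -/
def toTopObj (x : SimplexCategory) := { f : Fin (x.len + 1) → ℝ≥0 | ∑ i, f i = 1 }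

open scoped NNReal in
/-- A morphism in `SimplexCategory` induces a map on the associated topological spaces
(as in the older Mathlib). -/
def toTopMap {x y : SimplexCategory} (f : x ⟶ y) (g : x.toTopObj) : y.toTopObj :=
  ⟨fun i => ∑ j ∈ Finset.univ.filter (f.toOrderHom · = i), (g : Fin (x.len + 1) → ℝ≥0) j, by
    change ∑ i, _ = (1 : ℝ≥0)
    rw [Finset.sum_fiberwise]
    exact g.2⟩

theorem continuous_toTopMap {x y : SimplexCategory} (f : x ⟶ y) : Continuous (toTopMap f) := by
  refine Continuous.subtype_mk (continuous_pi fun i => ?_) _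
  exact continuous_finset_sum _ fun j _ => (continuous_apply j).comp continuous_subtype_val

end SimplexCategory

/-! ### Rational singular (co)homology, defined from scratch via singular simplices -/

/-- The topological standard `n`-simplex. -/
abbrev TopSimplex (n : ℕ) : Type := (SimplexCategory.mk n).toTopObj

/-- Singular `n`-simplices of `X`. -/
abbrev SingularSimplex (n : ℕ) (X : Type) [TopologicalSpace X] : Type := C(TopSimplex n, X)

/-- The module of rational singular `n`-chains on `X`. -/
abbrev SChain (n : ℕ) (X : Type) [TopologicalSpace X] : Type := SingularSimplex n X →₀ ℚ

/-- The `i`-th face inclusion of topological simplices. -/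
def faceMap (n : ℕ) (i : Fin (n + 2)) : C(TopSimplex n, TopSimplex (n + 1)) :=
  ⟨SimplexCategory.toTopMap (SimplexCategory.δ i), by
    exact SimplexCategory.continuous_toTopMap _⟩

/-- The singular boundary operator `∂ : C_{n+1}(X;ℚ) → C_n(X;ℚ)`. -/
def sBoundary (n : ℕ) (X : Type) [TopologicalSpace X] : SChain (n + 1) X →ₗ[ℚ] SChain n X :=
  ∑ i : Fin (n + 2), ((-1 : ℚ) ^ (i : ℕ)) •
    (Finsupp.lmapDomain ℚ ℚ (fun (sp : SingularSimplex (n+1) X) =>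
      sp.comp (faceMap n i)))

/-- The submodule of singular `n`-cycles. -/
def sCycles : ∀ (n : ℕ) (X : Type) [TopologicalSpace X], Submodule ℚ (SChain n X)
  | 0, _, _ => ⊤
  | (n + 1), X, _ => LinearMap.ker (sBoundary n X)

/-- The `n`-th rational singular homology of `X`. -/
def SingularHomology (n : ℕ) (X : Type) [TopologicalSpace X] : Type :=
  ↥(sCycles n X) ⧸ (Submodule.comap (sCycles n X).subtype
      (Submodule.map (sBoundary n X) ⊤))

instance (n : ℕ) (X : Type) [TopologicalSpace X] : AddCommGroup (SingularHomology n X) := by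
  unfold SingularHomology; infer_instance

instance (n : ℕ) (X : Type) [TopologicalSpace X] : Module ℚ (SingularHomology n X) := by
  unfold SingularHomology; infer_instance

/-- Rational singular `n`-cochains. -/
abbrev SCochain (n : ℕ) (X : Type) [TopologicalSpace X] : Type :=
  Module.Dual ℚ (SChain n X)

/-- The singular coboundary operator. -/
def sCoboundary (n : ℕ) (X : Type) [TopologicalSpace X] :
    SCochain n X →ₗ[ℚ] SCochain (n + 1) X :=
  (sBoundary n X).dualMap

/-- The submodule of `n`-coboundaries. -/
def sCoboundaries : ∀ (n : ℕ) (X : Type) [TopologicalSpace X], Submodule ℚ (SCochain n X)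
  | 0, _, _ => ⊥
  | (n + 1), X, _ => Submodule.map (sCoboundary n X) ⊤

/-- The `n`-th rational singular cohomology of `X`. -/
def SingularCohomology (n : ℕ) (X : Type) [TopologicalSpace X] : Type :=
  ↥(LinearMap.ker (sCoboundary n X)) ⧸
    (Submodule.comap (LinearMap.ker (sCoboundary n X)).subtype (sCoboundaries n X))

instance (n : ℕ) (X : Type) [TopologicalSpace X] : AddCommGroup (SingularCohomology n X) := by
  unfold SingularCohomology; infer_instance

instance (n : ℕ) (X : Type) [TopologicalSpace X] : Module ℚ (SingularCohomology n X) := by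
  unfold SingularCohomology; infer_instance

/-- The cohomology class of a cocycle. -/
def cohClassOf {n : ℕ} {X : Type} [TopologicalSpace X] (z : SCochain n X)
    (hz : z ∈ LinearMap.ker (sCoboundary n X)) : SingularCohomology n X :=
  Submodule.Quotient.mk ⟨z, hz⟩

/-- A space has finite rational type if its rational homology is degreewise finite
dimensional. -/
def FiniteRationalType (X : Type) [TopologicalSpace X] : Prop :=
  ∀ n : ℕ, FiniteDimensional ℚ (SingularHomology n X)


/-! ## Induced maps on homotopy groups, rational homotopy equivalences -/

/-- The map induced by a continuous map on generalized loops. -/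
def GenLoop.push {X Y : Type*} [TopologicalSpace X] [TopologicalSpace Y] (φ : C(X, Y))
    {N : Type*} {x : X} (p : GenLoop N X x) : GenLoop N Y (φ x) :=
  ⟨φ.comp p.1, fun y hy => by simp [p.2 y hy]⟩

/-- The map induced by a continuous map on homotopy groups. -/
def HomotopyGroup.map {X Y : Type*} [TopologicalSpace X] [TopologicalSpace Y] (φ : C(X, Y))
    (n : ℕ) (x : X) : HomotopyGroup (Fin n) X x → HomotopyGroup (Fin n) Y (φ x) :=
  Quotient.map (GenLoop.push φ)
    (fun _ _ h => Nonempty.map (fun H => H.compContinuousMap φ) h)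

/-- A map of groups is a rational isomorphism if its kernel and cokernel are torsion. -/
def IsRatIso {A B : Type*} [Group A] [Group B] (F : A → B) : Prop :=
  (∀ a : A, F a = 1 → ∃ k : ℕ, k ≠ 0 ∧ a ^ k = 1) ∧
  (∀ b : B, ∃ k : ℕ, k ≠ 0 ∧ ∃ a : A, F a = b ^ k)

/-- A continuous map is a rational (homotopy) equivalence if it induces a bijection on
path components and a rational isomorphism on all higher homotopy groups at all base
points.  For nilpotent spaces this is the standard notion of rational equivalence. -/
def IsRationalEquivMap {X Y : Type*} [TopologicalSpace X] [TopologicalSpace Y]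
    (φ : C(X, Y)) : Prop :=
  (∀ y : Y, ∃ x : X, Joined (φ x) y) ∧
  (∀ x x' : X, Joined (φ x) (φ x') → Joined x x') ∧
  (∀ (x : X) (q : ℕ), IsRatIso (HomotopyGroup.map φ (q + 1) x))

/-- One step of a zig-zag of rational equivalences. -/
def RatStep (X Y : TopCat.{0}) : Prop :=
  (∃ φ : C(X, Y), IsRationalEquivMap φ) ∨ (∃ ψ : C(Y, X), IsRationalEquivMap ψ)

/-- Two spaces have the same rational homotopy type if they are connected by a zig-zag of
rational equivalences. -/
def RationallyEquivalent (X Y : TopCat.{0}) : Prop :=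
  Relation.ReflTransGen RatStep X Y

/-- `X` is an Eilenberg–MacLane space of type `K(V, n)`:  it is nonempty, path connected,
its homotopy groups vanish in degrees `≠ n` and its `n`-th homotopy group is isomorphic,
as a group, to `V`. -/
def IsEilenbergMacLane (X : Type) [TopologicalSpace X] (V : Type*) [AddCommGroup V]
    (n : ℕ) : Prop :=
  Nonempty X ∧ PathConnectedSpace X ∧
    ∀ (x : X) (q : ℕ),
      (q + 1 = n → Nonempty (Additive (π_ (q + 1) X x) ≃+ V)) ∧
      (q + 1 ≠ n → Subsingleton (π_ (q + 1) X x))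


/-! ### Fibrations, rationalizations and fiberwise rationalizations -/

/-- The homotopy lifting property: `p` is a (Hurewicz) fibration. -/
def IsFibration {E B : Type} [TopologicalSpace E] [TopologicalSpace B] (p : C(E, B)) : Prop :=
  ∀ (Y : Type) [TopologicalSpace Y] (H : C(Y × unitInterval, B)) (g : C(Y, E)),
    (∀ y, H (y, 0) = p (g y)) →
    ∃ H' : C(Y × unitInterval, E), (∀ z, p (H' z) = H z) ∧ ∀ y, H' (y, 0) = g y

/-- A space is rational if it is simply connected and all its homotopy groups are
uniquely divisible. -/
def IsRationalSpace (Z : Type) [TopologicalSpace Z] : Prop :=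
  SimplyConnectedSpace Z ∧
    ∀ (z : Z) (q : ℕ) (n : ℕ), n ≠ 0 →
      Function.Bijective (fun a : π_ (q + 1) Z z => a ^ n)

/-- `r : X → Z` is a rationalization of `X`. -/
def IsRationalization {X Z : Type} [TopologicalSpace X] [TopologicalSpace Z]
    (r : C(X, Z)) : Prop :=
  IsRationalSpace Z ∧ IsRationalEquivMap r

/-! ### Auxiliary machinery: homotopy concatenation and a Dold-type key lemma -/

namespace FibAux

/-- clamp a real number to [0,1] -/
def clamp : ℝ → I := Set.projIcc 0 1 zero_le_one

lemma continuous_clamp : Continuous clamp := continuous_projIcc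

lemma coe_clamp (r : ℝ) : (clamp r : ℝ) = max 0 (min 1 r) := Set.coe_projIcc _ _ _ _

lemma clamp_of_mem {r : ℝ} (h0 : 0 ≤ r) (h1 : r ≤ 1) : (clamp r : ℝ) = r := by
  rw [coe_clamp]; rw [min_eq_right h1, max_eq_right h0]

lemma clamp_nonpos {r : ℝ} (h : r ≤ 0) : clamp r = 0 := by
  apply Subtype.ext; rw [coe_clamp]
  simp only [Set.Icc.coe_zero]
  rcases le_total 1 r with h'|h'
  · linarith
  · rw [min_eq_right h', max_eq_left h]

lemma clamp_ge_one {r : ℝ} (h : 1 ≤ r) : clamp r = 1 := by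
  apply Subtype.ext; rw [coe_clamp]
  simp only [Set.Icc.coe_one]
  rw [min_eq_left h, max_eq_right zero_le_one]

lemma clamp_zero : clamp 0 = 0 := clamp_nonpos le_rfl
lemma clamp_one : clamp 1 = 1 := clamp_ge_one le_rfl

variable {Z W : Type*} [TopologicalSpace Z] [TopologicalSpace W]

/-- concatenation of two homotopies (raw form). -/
def hcat (h₁ h₂ : C(Z × I, W)) (hm : ∀ z, h₁ (z, 1) = h₂ (z, 0)) : C(Z × I, W) :=
  ⟨fun zt => if ((zt.2 : ℝ)) ≤ 1/2 then h₁ (zt.1, clamp (2 * zt.2))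
      else h₂ (zt.1, clamp (2 * zt.2 - 1)), by
    apply Continuous.if_le
    · exact h₁.continuous.comp (continuous_fst.prodMk
        (continuous_clamp.comp (by continuity)))
    · exact h₂.continuous.comp (continuous_fst.prodMk
        (continuous_clamp.comp (by continuity)))
    · exact continuous_subtype_val.comp continuous_snd
    · exact continuous_const
    · intro zt h
      have h2 : 2 * (zt.2 : ℝ) = 1 := by rw [h]; ring
      rw [h2, clamp_one]
      have h3 : (1 : ℝ) - 1 = 0 := by norm_num
      rw [h3, clamp_zero]
      exact hm _⟩

lemma hcat_apply (h₁ h₂ : C(Z × I, W)) (hm : ∀ z, h₁ (z, 1) = h₂ (z, 0)) (z : Z) (t : I) :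
    hcat h₁ h₂ hm (z, t) = if ((t : ℝ)) ≤ 1/2 then h₁ (z, clamp (2 * t))
      else h₂ (z, clamp (2 * t - 1)) := rfl

lemma hcat_zero (h₁ h₂ : C(Z × I, W)) (hm : ∀ z, h₁ (z, 1) = h₂ (z, 0)) (z : Z) :
    hcat h₁ h₂ hm (z, 0) = h₁ (z, 0) := by
  rw [hcat_apply]
  have : ((0 : I) : ℝ) = 0 := rfl
  rw [if_pos (by rw [this]; norm_num)]
  norm_num [this, clamp_zero]

lemma hcat_one (h₁ h₂ : C(Z × I, W)) (hm : ∀ z, h₁ (z, 1) = h₂ (z, 0)) (z : Z) :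
    hcat h₁ h₂ hm (z, 1) = h₂ (z, 1) := by
  rw [hcat_apply]
  have : ((1 : I) : ℝ) = 1 := rfl
  rw [if_neg (by rw [this]; norm_num)]
  norm_num [this, clamp_one]

lemma hcat_vals (h₁ h₂ : C(Z × I, W)) (hm : ∀ z, h₁ (z, 1) = h₂ (z, 0)) (z : Z) (t : I) :
    (∃ u, hcat h₁ h₂ hm (z, t) = h₁ (z, u)) ∨ (∃ u, hcat h₁ h₂ hm (z, t) = h₂ (z, u)) := by
  rw [hcat_apply]
  split
  · exact Or.inl ⟨_, rfl⟩
  · exact Or.inr ⟨_, rfl⟩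

/-- reversal of a homotopy. -/
def hsymm (h : C(Z × I, W)) : C(Z × I, W) :=
  ⟨fun zt => h (zt.1, unitInterval.symm zt.2),
   h.continuous.comp (continuous_fst.prodMk
     (unitInterval.continuous_symm.comp continuous_snd))⟩

lemma hsymm_apply (h : C(Z × I, W)) (z : Z) (t : I) :
    hsymm h (z, t) = h (z, unitInterval.symm t) := rfl

lemma hsymm_zero (h : C(Z × I, W)) (z : Z) : hsymm h (z, 0) = h (z, 1) := by
  rw [hsymm_apply, unitInterval.symm_zero]

lemma hsymm_one (h : C(Z × I, W)) (z : Z) : hsymm h (z, 1) = h (z, 0) := by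
  rw [hsymm_apply, unitInterval.symm_one]

end FibAux

attribute [fun_prop] FibAux.continuous_clamp
attribute [fun_prop] unitInterval.continuous_symm

namespace FibAux

variable {D Cb : Type} [TopologicalSpace D] [TopologicalSpace Cb]

/-- **Key lemma**: for a fibration `p : D → Cb`, a fiber self-map `k` freely homotopic
to the identity admits a fiber map `k'` with a *vertical* homotopy `k' ∘ k ≃ 1`. -/
theorem key (p : C(D, Cb)) (hp : IsFibration p) (k : C(D, D)) (hk : ∀ d, p (k d) = p d)
    (K : C(D × I, D)) (K0 : ∀ d, K (d, 0) = k d) (K1 : ∀ d, K (d, 1) = d) :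
    ∃ (k' : C(D, D)) (V : C(D × I, D)),
      (∀ d, p (k' d) = p d) ∧ (∀ d, V (d, 0) = k' (k d)) ∧ (∀ d, V (d, 1) = d) ∧
      (∀ d t, p (V (d, t)) = p d) := by
  have i0 : ((0 : I) : ℝ) = 0 := rfl
  have i1 : ((1 : I) : ℝ) = 1 := rfl
  -- Step 1: lift the track of `K` starting from the identity.
  obtain ⟨L, hL, L0⟩ := hp D (p.comp K) (ContinuousMap.id D)
    (fun d => by simp only [ContinuousMap.comp_apply, ContinuousMap.id_apply, K0, hk])
  set k' : C(D, D) := ⟨fun d => L (d, 1),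
    L.continuous.comp (continuous_id.prodMk continuous_const)⟩ with hk'def
  have hk' : ∀ d, p (k' d) = p d := by
    intro d
    have h := hL (d, 1)
    simp only [ContinuousMap.comp_apply, K1] at h
    exact h
  -- Step 2: the homotopy `h` from `k' ∘ k` to `1`.
  set h₁ : C(D × I, D) := ⟨fun zt => L (k zt.1, unitInterval.symm zt.2),
    L.continuous.comp ((k.continuous.comp continuous_fst).prodMk
      (unitInterval.continuous_symm.comp continuous_snd))⟩ with hh₁def
  have hmid : ∀ z, h₁ (z, 1) = K (z, 0) := by
    intro d
    simp only [hh₁def, ContinuousMap.coe_mk, unitInterval.symm_one, K0]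
    exact L0 (k d)
  set h : C(D × I, D) := hcat h₁ K hmid with hhdef
  -- Step 3: the explicit contraction `HH` of the track of `h`.
  set HH : C((D × I) × I, Cb) := ⟨fun zs =>
    if 1 - (zs.2 : ℝ) ≤ 1/2 then
      p (K (zs.1.1, clamp (2 * (1 - (zs.2 : ℝ)) *
        min (2 * (zs.1.2 : ℝ)) (2 - 2 * (zs.1.2 : ℝ)))))
    else if (zs.1.2 : ℝ) ≤ 1/2 then
      p (K (K (zs.1.1, clamp (2 * (zs.1.2 : ℝ) * (2 - 2 * (1 - (zs.2 : ℝ))))),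
        clamp (1 - 2 * (2 * (1 - (zs.2 : ℝ)) - 1) * (zs.1.2 : ℝ))))
    else
      p (K (K (zs.1.1, clamp ((2 - 2 * (1 - (zs.2 : ℝ))) +
          (2 * (1 - (zs.2 : ℝ)) - 1) * (2 * (zs.1.2 : ℝ) - 1))),
        clamp ((2 - 2 * (1 - (zs.2 : ℝ))) * (2 - 2 * (zs.1.2 : ℝ))))), by
    apply Continuous.if_le
    · fun_prop
    · apply Continuous.if_le
      · fun_prop
      · fun_prop
      · fun_prop
      · exact continuous_const
      · -- inner frontier : t = 1/2
        rintro ⟨⟨d, t⟩, s⟩ hT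
        simp only at hT ⊢
        have ea : 2 * (t : ℝ) * (2 - 2 * (1 - (s : ℝ))) =
            (2 - 2 * (1 - (s : ℝ))) + (2 * (1 - (s : ℝ)) - 1) * (2 * (t : ℝ) - 1) := by
          rw [hT]; ring
        have eb : 1 - 2 * (2 * (1 - (s : ℝ)) - 1) * (t : ℝ) =
            (2 - 2 * (1 - (s : ℝ))) * (2 - 2 * (t : ℝ)) := by
          rw [hT]; ring
        rw [ea, eb]
    · fun_prop
    · exact continuous_const
    · -- outer frontier : 1 - s = 1/2
      rintro ⟨⟨d, t⟩, s⟩ hS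
      simp only at hS ⊢
      by_cases hT : (t : ℝ) ≤ 1/2
      · rw [if_pos hT]
        have ea : 2 * (1 - (s : ℝ)) * min (2 * (t : ℝ)) (2 - 2 * (t : ℝ)) = 2 * (t : ℝ) := by
          rw [min_eq_left (by linarith)]
          linear_combination (4 * (t : ℝ)) * hS
        have eb : 2 * (t : ℝ) * (2 - 2 * (1 - (s : ℝ))) = 2 * (t : ℝ) := by
          linear_combination (-4 * (t : ℝ)) * hS
        have ec : 1 - 2 * (2 * (1 - (s : ℝ)) - 1) * (t : ℝ) = 1 := by
          linear_combination (-4 * (t : ℝ)) * hS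
        rw [ea, eb, ec, clamp_one, K1]
      · rw [if_neg hT]
        have ea : 2 * (1 - (s : ℝ)) * min (2 * (t : ℝ)) (2 - 2 * (t : ℝ)) =
            2 - 2 * (t : ℝ) := by
          rw [min_eq_right (by linarith)]
          linear_combination (2 * (2 - 2 * (t : ℝ))) * hS
        have eb : (2 - 2 * (1 - (s : ℝ))) + (2 * (1 - (s : ℝ)) - 1) * (2 * (t : ℝ) - 1) =
            1 := by
          linear_combination (4 * (t : ℝ) - 4) * hS
        have ec : (2 - 2 * (1 - (s : ℝ))) * (2 - 2 * (t : ℝ)) = 2 - 2 * (t : ℝ) := by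
          linear_combination (-2 * (2 - 2 * (t : ℝ))) * hS
        rw [ea, eb, ec, clamp_one, K1]⟩ with hHHdef
  -- boundary values of `HH`
  have Binit : ∀ (d : D) (t : I), HH ((d, t), 0) = p (h (d, t)) := by
    intro d t
    simp only [hHHdef, ContinuousMap.coe_mk, i0]
    rw [if_neg (by norm_num)]
    rw [hhdef, hcat_apply]
    by_cases hT : (t : ℝ) ≤ 1/2
    · rw [if_pos hT, if_pos hT]
      have ea : 2 * (t : ℝ) * (2 - 2 * (1 - (0 : ℝ))) = 0 := by ring
      have eb : 1 - 2 * (2 * (1 - (0 : ℝ)) - 1) * (t : ℝ) = 1 - 2 * (t : ℝ) := by ring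
      rw [ea, eb, clamp_zero, K0]
      have hLval := hL (k d, clamp (1 - 2 * (t : ℝ)))
      simp only [ContinuousMap.comp_apply] at hLval
      have es : unitInterval.symm (clamp (2 * (t : ℝ))) = clamp (1 - 2 * (t : ℝ)) := by
        apply Subtype.ext
        rw [unitInterval.coe_symm_eq, coe_clamp, coe_clamp]
        have h1 : 0 ≤ (t : ℝ) := t.2.1
        rw [min_eq_right (by linarith), max_eq_right (by linarith),
          min_eq_right (by linarith), max_eq_right (by linarith)]
      simp only [hh₁def, ContinuousMap.coe_mk]
      rw [es, hLval]
    · rw [if_neg hT, if_neg hT]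
      have ea : (2 - 2 * (1 - (0 : ℝ))) + (2 * (1 - (0 : ℝ)) - 1) * (2 * (t : ℝ) - 1) =
          2 * (t : ℝ) - 1 := by ring
      have eb : (2 - 2 * (1 - (0 : ℝ))) * (2 - 2 * (t : ℝ)) = 0 := by ring
      rw [ea, eb, clamp_zero, K0, hk]
  have Bt0 : ∀ (d : D) (s : I), HH ((d, 0), s) = p d := by
    intro d s
    simp only [hHHdef, ContinuousMap.coe_mk, i0]
    split_ifs with hS hT
    · have ea : 2 * (1 - (s : ℝ)) * min (2 * (0 : ℝ)) (2 - 2 * (0 : ℝ)) = 0 := by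
        rw [min_eq_left (by norm_num)]; ring
      rw [ea, clamp_zero, K0, hk]
    · have ea : 2 * (0 : ℝ) * (2 - 2 * (1 - (s : ℝ))) = 0 := by ring
      have eb : 1 - 2 * (2 * (1 - (s : ℝ)) - 1) * (0 : ℝ) = 1 := by ring
      rw [ea, eb, clamp_zero, clamp_one, K0, K1, hk]
    · exact absurd (by norm_num) hT
  have Bt1 : ∀ (d : D) (s : I), HH ((d, 1), s) = p d := by
    intro d s
    simp only [hHHdef, ContinuousMap.coe_mk, i1]
    split_ifs with hS hT
    · have ea : 2 * (1 - (s : ℝ)) * min (2 * (1 : ℝ)) (2 - 2 * (1 : ℝ)) = 0 := by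
        rw [min_eq_right (by norm_num)]; ring
      rw [ea, clamp_zero, K0, hk]
    · exact absurd hT (by norm_num)
    · have ea : (2 - 2 * (1 - (s : ℝ))) + (2 * (1 - (s : ℝ)) - 1) * (2 * (1 : ℝ) - 1) =
          1 := by ring
      have eb : (2 - 2 * (1 - (s : ℝ))) * (2 - 2 * (1 : ℝ)) = 0 := by ring
      rw [ea, eb, clamp_zero, clamp_one, K1, K0, hk]
  have Bs1 : ∀ (d : D) (t : I), HH ((d, t), 1) = p d := by
    intro d t
    simp only [hHHdef, ContinuousMap.coe_mk, i1]
    rw [if_pos (by norm_num)]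
    have ea : 2 * (1 - (1 : ℝ)) * min (2 * (t : ℝ)) (2 - 2 * (t : ℝ)) = 0 := by ring
    rw [ea, clamp_zero, K0, hk]
  -- Step 4: lift the contraction starting from `h`.
  obtain ⟨G, hG, G0⟩ := hp (D × I) HH h (fun y => Binit y.1 y.2)
  set u : C(D × I, D) := ⟨fun zs => G ((zs.1, 0), zs.2),
    G.continuous.comp ((continuous_fst.prodMk continuous_const).prodMk
      continuous_snd)⟩ with hudef
  set P : C(D × I, D) := ⟨fun zt => G ((zt.1, zt.2), 1),
    G.continuous.comp ((continuous_fst.prodMk continuous_snd).prodMk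
      continuous_const)⟩ with hPdef
  set v : C(D × I, D) := ⟨fun zs => G ((zs.1, 1), zs.2),
    G.continuous.comp ((continuous_fst.prodMk continuous_const).prodMk
      continuous_snd)⟩ with hvdef
  have m1 : ∀ z, u (z, 1) = P (z, 0) := fun z => rfl
  have m2 : ∀ z, hcat u P m1 (z, 1) = hsymm v (z, 0) := by
    intro z
    rw [hcat_one, hsymm_zero]
    rfl
  refine ⟨k', hcat (hcat u P m1) (hsymm v) m2, hk', ?_, ?_, ?_⟩
  · intro d
    rw [hcat_zero, hcat_zero]
    have : u (d, 0) = h (d, 0) := G0 (d, 0)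
    rw [this, hhdef, hcat_zero]
    simp only [hh₁def, ContinuousMap.coe_mk, unitInterval.symm_zero]
    rfl
  · intro d
    rw [hcat_one, hsymm_one]
    have : v (d, 0) = h (d, 1) := G0 (d, 1)
    rw [this, hhdef, hcat_one, K1]
  · intro d t
    have hu : ∀ s : I, p (u (d, s)) = p d := by
      intro s
      have := hG ((d, 0), s)
      rw [Bt0] at this
      exact this
    have hP : ∀ s : I, p (P (d, s)) = p d := by
      intro s
      have := hG ((d, s), 1)
      rw [Bs1] at this
      exact this
    have hv : ∀ s : I, p (v (d, s)) = p d := by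
      intro s
      have := hG ((d, 1), s)
      rw [Bt1] at this
      exact this
    rcases hcat_vals (hcat u P m1) (hsymm v) m2 d t with ⟨w, hw⟩ | ⟨w, hw⟩
    · rw [hw]
      rcases hcat_vals u P m1 d w with ⟨w', hw'⟩ | ⟨w', hw'⟩
      · rw [hw']; exact hu w'
      · rw [hw']; exact hP w'
    · rw [hw, hsymm_apply]
      exact hv _

end FibAux


/-- Let `ξ = (E, p, B)` be a fibration with simply connected base `B`
and simply connected fiber `F = p⁻¹(b₀)`, and let `rE : E → E_ℚ`, `rB : B → B_ℚ`,
`rF : F → F_ℚ` be rationalizations with `p_ℚ : E_ℚ → B_ℚ` covering `p`.  If the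
rationalized fibration is trivial, i.e. there is a homotopy equivalence
`E_ℚ ≃ B_ℚ × F_ℚ` over `B_ℚ`, then the fiberwise rationalization
`E_(ℚ) = B ×_{B_ℚ} E_ℚ → B` is trivial over `B`:  there is a homotopy equivalence
`E_(ℚ) ≃ B × F_ℚ` over `B`. -/
theorem fiberwise_rationalization_trivial
    (E B Eq Bq Fq : Type) [TopologicalSpace E] [TopologicalSpace B] [TopologicalSpace Eq]
    [TopologicalSpace Bq] [TopologicalSpace Fq]
    [SimplyConnectedSpace B]
    (p : C(E, B)) (hp : IsFibration p) (b₀ : B)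
    [SimplyConnectedSpace {e : E // p e = b₀}]
    (rE : C(E, Eq)) (hrE : IsRationalization rE)
    (rB : C(B, Bq)) (hrB : IsRationalization rB)
    (rF : C({e : E // p e = b₀}, Fq)) (hrF : IsRationalization rF)
    (pq : C(Eq, Bq)) (hpq : IsFibration pq)
    (hcomm : ∀ e : E, pq (rE e) = rB (p e))
    (htriv : ∃ Φ : ContinuousMap.HomotopyEquiv Eq (Bq × Fq),
      (ContinuousMap.fst.comp Φ.toFun).Homotopic pq) :
    ∃ Ψ : ContinuousMap.HomotopyEquiv {z : B × Eq // rB z.1 = pq z.2} (B × Fq),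
      (ContinuousMap.fst.comp Ψ.toFun).Homotopic
        ⟨fun z => z.1.1, by exact continuous_fst.comp continuous_subtype_val⟩ := by
  classical
  obtain ⟨Φ, hΦH⟩ := htriv
  obtain ⟨H⟩ := hΦH
  obtain ⟨A⟩ := Φ.left_inv
  obtain ⟨C⟩ := Φ.right_inv
  set φ : C(Eq, Bq × Fq) := Φ.toFun with hφdef
  set θ₀ : C(Bq × Fq, Eq) := Φ.invFun with hθdef
  -- the strictified trivialization
  set φ' : C(Eq, Bq × Fq) := ⟨fun e => (pq e, (φ e).2), by fun_prop⟩ with hφ'def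
  -- homotopy from `φ` to `φ'`
  set D' : C(Eq × I, Bq × Fq) := ⟨fun et => (H (et.2, et.1), (φ et.1).2), by
    refine Continuous.prodMk ?_ (continuous_snd.comp (φ.continuous.comp continuous_fst))
    exact H.toContinuousMap.continuous.comp (continuous_snd.prodMk continuous_fst)⟩
    with hD'def
  have D'0 : ∀ e, D' (e, 0) = φ e := by
    intro e
    simp only [hD'def, ContinuousMap.coe_mk, H.apply_zero, ContinuousMap.comp_apply,
      ContinuousMap.fst_apply]
  have D'1 : ∀ e, D' (e, 1) = φ' e := by
    intro e
    simp only [hD'def, hφ'def, ContinuousMap.coe_mk, H.apply_one]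
  -- `A' : θ₀ ∘ φ' ≃ 1`
  set θD : C(Eq × I, Eq) := θ₀.comp D' with hθDdef
  set Araw : C(Eq × I, Eq) := ⟨fun et => A (et.2, et.1),
    A.toContinuousMap.continuous.comp (continuous_snd.prodMk continuous_fst)⟩ with hAdef
  have hmA : ∀ e, FibAux.hsymm θD (e, 1) = Araw (e, 0) := by
    intro e
    rw [FibAux.hsymm_one]
    simp only [hθDdef, hAdef, ContinuousMap.comp_apply, ContinuousMap.coe_mk, D'0,
      A.apply_zero]
  set A' : C(Eq × I, Eq) := FibAux.hcat (FibAux.hsymm θD) Araw hmA with hA'def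
  have A'0 : ∀ e, A' (e, 0) = θ₀ (φ' e) := by
    intro e
    rw [hA'def, FibAux.hcat_zero, FibAux.hsymm_zero]
    simp only [hθDdef, ContinuousMap.comp_apply, D'1]
  have A'1 : ∀ e, A' (e, 1) = e := by
    intro e
    rw [hA'def, FibAux.hcat_one]
    simp only [hAdef, ContinuousMap.coe_mk, A.apply_one, ContinuousMap.id_apply]
  -- `C' : φ' ∘ θ₀ ≃ 1`
  set Dθ : C((Bq × Fq) × I, Bq × Fq) := ⟨fun wt => D' (θ₀ wt.1, wt.2), by fun_prop⟩
    with hDθdef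
  set Craw : C((Bq × Fq) × I, Bq × Fq) := ⟨fun wt => C (wt.2, wt.1),
    C.toContinuousMap.continuous.comp (continuous_snd.prodMk continuous_fst)⟩ with hCdef
  have hmC : ∀ w, FibAux.hsymm Dθ (w, 1) = Craw (w, 0) := by
    intro w
    rw [FibAux.hsymm_one]
    simp only [hDθdef, hCdef, ContinuousMap.coe_mk, D'0, C.apply_zero,
      ContinuousMap.comp_apply]
  set C' : C((Bq × Fq) × I, Bq × Fq) := FibAux.hcat (FibAux.hsymm Dθ) Craw hmC with hC'def
  have C'0 : ∀ w, C' (w, 0) = φ' (θ₀ w) := by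
    intro w
    rw [hC'def, FibAux.hcat_zero, FibAux.hsymm_zero]
    simp only [hDθdef, ContinuousMap.coe_mk, D'1]
  have C'1 : ∀ w, C' (w, 1) = w := by
    intro w
    rw [hC'def, FibAux.hcat_one]
    simp only [hCdef, ContinuousMap.coe_mk, C.apply_one, ContinuousMap.id_apply]
  -- deform `θ₀` into a strict fiber map `g₁`
  obtain ⟨Gh, hGh, Gh0⟩ := hpq (Bq × Fq) ⟨fun wt => (C' wt).1, by fun_prop⟩ θ₀
    (fun w => by simp only [ContinuousMap.coe_mk, C'0, hφ'def])
  set g₁ : C(Bq × Fq, Eq) := ⟨fun w => Gh (w, 1), by fun_prop⟩ with hg₁def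
  have hg₁ : ∀ w, pq (g₁ w) = w.1 := by
    intro w
    have h := hGh (w, 1)
    simp only [ContinuousMap.coe_mk, C'1] at h
    exact h
  -- the fiber self-map `k = g₁ ∘ φ'` with its free homotopy to the identity
  set k : C(Eq, Eq) := g₁.comp φ' with hkdef
  have hkfib : ∀ e, pq (k e) = pq e := by
    intro e
    simp only [hkdef, ContinuousMap.comp_apply, hg₁, hφ'def, ContinuousMap.coe_mk]
  set Ew : C(Eq × I, Eq) := ⟨fun et => Gh (φ' et.1, unitInterval.symm et.2), by fun_prop⟩
    with hEwdef
  have hmK : ∀ e, Ew (e, 1) = A' (e, 0) := by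
    intro e
    simp only [hEwdef, ContinuousMap.coe_mk, unitInterval.symm_one, Gh0, A'0]
  set Kk : C(Eq × I, Eq) := FibAux.hcat Ew A' hmK with hKkdef
  have Kk0 : ∀ e, Kk (e, 0) = k e := by
    intro e
    rw [hKkdef, FibAux.hcat_zero]
    simp only [hEwdef, ContinuousMap.coe_mk, unitInterval.symm_zero, hkdef,
      ContinuousMap.comp_apply, hg₁def]
  have Kk1 : ∀ e, Kk (e, 1) = e := by
    intro e
    rw [hKkdef, FibAux.hcat_one]
    exact A'1 e
  -- the key lemma: a vertical homotopy `k' ∘ k ≃ 1`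
  obtain ⟨k', V, hk', V0, V1, hV⟩ := FibAux.key pq hpq k hkfib Kk Kk0 Kk1
  set g₂ : C(Bq × Fq, Eq) := k'.comp g₁ with hg₂def
  have hg₂ : ∀ w, pq (g₂ w) = w.1 := by
    intro w
    simp only [hg₂def, ContinuousMap.comp_apply, hk', hg₁]
  -- a free homotopy `φ' ∘ g₂ ≃ 1`
  set Q1 : C((Bq × Fq) × I, Bq × Fq) :=
    ⟨fun wt => φ' (g₂ (C' (wt.1, unitInterval.symm wt.2))), by fun_prop⟩ with hQ1def
  set Q2 : C((Bq × Fq) × I, Bq × Fq) := ⟨fun wt => φ' (V (θ₀ wt.1, wt.2)), by fun_prop⟩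
    with hQ2def
  have hm23 : ∀ w, Q2 (w, 1) = C' (w, 0) := by
    intro w
    simp only [hQ2def, ContinuousMap.coe_mk, V1, C'0]
  have hm12 : ∀ w, Q1 (w, 1) = FibAux.hcat Q2 C' hm23 (w, 0) := by
    intro w
    rw [FibAux.hcat_zero]
    simp only [hQ1def, hQ2def, ContinuousMap.coe_mk, unitInterval.symm_one, C'0, V0,
      hg₂def, hkdef, ContinuousMap.comp_apply]
  set Qf : C((Bq × Fq) × I, Bq × Fq) := FibAux.hcat Q1 (FibAux.hcat Q2 C' hm23) hm12
    with hQfdef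
  have Qf0 : ∀ w, Qf (w, 0) = φ' (g₂ w) := by
    intro w
    rw [hQfdef, FibAux.hcat_zero]
    simp only [hQ1def, ContinuousMap.coe_mk, unitInterval.symm_zero, C'1]
  have Qf1 : ∀ w, Qf (w, 1) = w := by
    intro w
    rw [hQfdef, FibAux.hcat_one, FibAux.hcat_one]
    exact C'1 w
  -- the two maps of the fiberwise trivialization
  set θmap : C({z : B × Eq // rB z.1 = pq z.2}, B × Fq) :=
    ⟨fun z => (z.1.1, (φ z.1.2).2), by fun_prop⟩ with hθmapdef
  set σmap : C(B × Fq, {z : B × Eq // rB z.1 = pq z.2}) :=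
    ⟨fun w => ⟨(w.1, g₂ (rB w.1, w.2)), (hg₂ (rB w.1, w.2)).symm⟩, by
      apply Continuous.subtype_mk
      fun_prop⟩ with hσmapdef
  have hφ'snd : ∀ e, (φ' e).2 = (φ e).2 := fun e => rfl
  have hkey : ∀ z : {z : B × Eq // rB z.1 = pq z.2},
      g₂ (rB z.1.1, (φ z.1.2).2) = k' (k z.1.2) := by
    intro z
    have hz : (rB z.1.1, (φ z.1.2).2) = φ' z.1.2 := by
      simp only [hφ'def, ContinuousMap.coe_mk]
      exact Prod.ext z.2 rfl
    rw [hz]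
    simp only [hg₂def, hkdef, ContinuousMap.comp_apply]
  refine ⟨⟨θmap, σmap, ⟨?_⟩, ⟨?_⟩⟩, ?_⟩
  · -- left inverse up to homotopy
    refine ContinuousMap.Homotopy.mk
      ⟨fun tz => ⟨(tz.2.1.1, V (tz.2.1.2, tz.1)), ?_⟩, ?_⟩ ?_ ?_
    · rw [hV]
      exact tz.2.2
    · apply Continuous.subtype_mk
      fun_prop
    · intro z
      apply Subtype.ext
      simp only [ContinuousMap.coe_mk, ContinuousMap.comp_apply, hσmapdef, hθmapdef]
      exact Prod.ext rfl ((V0 _).trans (hkey z).symm)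
    · intro z
      apply Subtype.ext
      simp only [ContinuousMap.coe_mk, ContinuousMap.id_apply]
      exact Prod.ext rfl (V1 _)
  · -- right inverse up to homotopy
    refine ContinuousMap.Homotopy.mk
      ⟨fun tw => (tw.2.1, (Qf ((rB tw.2.1, tw.2.2), tw.1)).2), by fun_prop⟩ ?_ ?_
    · intro w
      simp only [ContinuousMap.coe_mk, ContinuousMap.comp_apply, hσmapdef, hθmapdef, Qf0,
        hφ'def]
    · intro w
      simp only [ContinuousMap.coe_mk, ContinuousMap.id_apply, Qf1]
  · -- the equivalence is over `B`
    have hover : ContinuousMap.fst.comp θmap =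
        (⟨fun z => z.1.1, by exact continuous_fst.comp continuous_subtype_val⟩ :
          C({z : B × Eq // rB z.1 = pq z.2}, B)) := by
      ext z
      rfl
    show (ContinuousMap.fst.comp θmap).Homotopic _
    rw [hover]


end
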